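/- arXiv:2502.08202 — 8 statements merged into one kernel-verified Lean document; each statement's English description precedes it below -/
import Mathlib

section
/- Advanced joint convexity: for λ ∈ [0,1], κ > 1, and distributions P, Q, one has H_κ((1−λ)Q + λP ‖ Q) = λ · H_{κ'}(P‖Q), where κ' = 1 + (κ−1)/λ. -/
open MeasureTheory

/-- At `λ = 0` both sides vanish: the left since `κ ≥ 1`, the right through the factor `λ`
(the junk value `(κ - 1) / 0 = 0` is harmless there). -/
lemma max_mixture_sub_mul_eq_mul_max {𝕜 : Type*} [Field 𝕜] [LinearOrder 𝕜] [IsStrictOrderedRing 𝕜]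
    {κ lam a b : 𝕜} (hκ : 1 ≤ κ) (hl : 0 ≤ lam) (hb : 0 ≤ b) :
    max (((1 - lam) * b + lam * a) - κ * b) 0 = lam * max (a - (1 + (κ - 1) / lam) * b) 0 := by
  rcases hl.eq_or_lt with rfl | hpos
  · have : (1 - κ) * b ≤ 0 := mul_nonpos_of_nonpos_of_nonneg (by linarith) hb
    simpa [sub_mul] using this
  · have hmix : ((1 - lam) * b + lam * a) - κ * b = lam * (a - (1 + (κ - 1) / lam) * b) := by
      field_simp
      ring
    rw [hmix, mul_max_of_nonneg _ _ hl, mul_zero]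

theorem advanced_joint_convexity_general {Ω : Type*} [MeasurableSpace Ω] (μ : Measure Ω)
    (p q : Ω → ℝ) (κ lam : ℝ) (hκ : 1 < κ) (hl0 : 0 ≤ lam)
    (hq : ∀ ω, 0 ≤ q ω) :
    ∫ ω, max (((1 - lam) * q ω + lam * p ω) - κ * q ω) 0 ∂μ
      = lam * ∫ ω, max (p ω - (1 + (κ - 1) / lam) * q ω) 0 ∂μ := by
  simp_rw [max_mixture_sub_mul_eq_mul_max hκ.le hl0 (hq _)]
  exact integral_const_mul lam _

/-- Advanced joint convexity: `H_κ((1−λ)Q + λP ‖ Q) = λ · H_{κ'}(P‖Q)` with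
`κ' = 1 + (κ−1)/λ`. -/
theorem advanced_joint_convexity {Ω : Type*} [MeasurableSpace Ω] (μ : Measure Ω)
    (p q : Ω → ℝ) (κ lam : ℝ) (hκ : 1 < κ) (hl0 : 0 ≤ lam) (hl1 : lam ≤ 1)
    (hp : ∀ ω, 0 ≤ p ω) (hq : ∀ ω, 0 ≤ q ω)
    (hp1 : ∫ ω, p ω ∂μ = 1) (hq1 : ∫ ω, q ω ∂μ = 1) :
    ∫ ω, max (((1 - lam) * q ω + lam * p ω) - κ * q ω) 0 ∂μ
      = lam * ∫ ω, max (p ω - (1 + (κ - 1) / lam) * q ω) 0 ∂μ :=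
  advanced_joint_convexity_general μ p q κ lam hκ hl0 hq
end

section
/- For λ ∈ [0,1], κ > 1 with κ ≤ 1/(1−λ), and distributions P, Q, H_κ(P ‖ (1−λ)P + λQ) = β · H_{κ''}(P‖Q), where β = 1 − κ + κλ and κ'' = 1 + (κ−1)/(1−κ+κλ); and if κ > 1/(1−λ) then H_κ(P ‖ (1−λ)P + λQ) = 0. -/
/-!
Pointwise, `p - κ((1-λ)p + λq) = βp - κλq` with `β = 1 - κ + κλ`. If `β > 0` this is
`β(p - (κλ/β)q)` and `κλ/β = 1 + (κ-1)/β`, so the positive part, and hence its integral, scales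
by `β`. If `β ≤ 0` the integrand is nonpositive, because `p, q ≥ 0` and `κλ ≥ 0`.
-/

open MeasureTheory

theorem sub_mul_mixture_eq {R : Type*} [CommRing R] (k l x y : R) :
    x - k * ((1 - l) * x + l * y) = (1 - k + k * l) * x - k * l * y := by
  ring

theorem max_mul_sub_mul_eq_zero {α : Type*} [Ring α] [LinearOrder α] [IsOrderedRing α]
    {a b x y : α} (ha : a ≤ 0) (hb : 0 ≤ b) (hx : 0 ≤ x) (hy : 0 ≤ y) :
    max (a * x - b * y) 0 = 0 :=
  max_eq_right <| sub_nonpos.mpr <| (mul_nonpos_of_nonpos_of_nonneg ha hx).trans (mul_nonneg hb hy)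

theorem max_mul_sub_mul_eq_mul_max {α : Type*} [Field α] [LinearOrder α] [IsStrictOrderedRing α]
    {a : α} (b x y : α) (ha : 0 < a) :
    max (a * x - b * y) 0 = a * max (x - b / a * y) 0 := by
  rw [mul_max_of_nonneg _ _ ha.le, mul_zero, mul_sub, ← mul_assoc, mul_div_cancel₀ _ ha.ne']

noncomputable def hockeyStick {Ω : Type*} [MeasurableSpace Ω] (μ : Measure Ω) (p q : Ω → ℝ)
    (κ : ℝ) : ℝ :=
  ∫ ω, max (p ω - κ * q ω) 0 ∂μ

section Mixture

variable {Ω : Type*} [MeasurableSpace Ω] (μ : Measure Ω) (p q : Ω → ℝ) {κ lam : ℝ}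

theorem hockeyStick_mixture_eq_zero (hβ : 1 - κ + κ * lam ≤ 0) (hκlam : 0 ≤ κ * lam)
    (hp : ∀ ω, 0 ≤ p ω) (hq : ∀ ω, 0 ≤ q ω) :
    hockeyStick μ p (fun ω ↦ (1 - lam) * p ω + lam * q ω) κ = 0 := by
  have hzero : ∀ ω, max (p ω - κ * ((1 - lam) * p ω + lam * q ω)) 0 = 0 := fun ω ↦ by
    rw [sub_mul_mixture_eq]
    exact max_mul_sub_mul_eq_zero hβ hκlam (hp ω) (hq ω)
  simp only [hockeyStick, hzero, integral_zero]

theorem hockeyStick_mixture_eq_mul (hβ : 0 < 1 - κ + κ * lam) :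
    hockeyStick μ p (fun ω ↦ (1 - lam) * p ω + lam * q ω) κ
      = (1 - κ + κ * lam) * hockeyStick μ p q (1 + (κ - 1) / (1 - κ + κ * lam)) := by
  have hcoeff : 1 + (κ - 1) / (1 - κ + κ * lam) = κ * lam / (1 - κ + κ * lam) := by
    field_simp
    ring
  simp only [hockeyStick, sub_mul_mixture_eq, max_mul_sub_mul_eq_mul_max _ _ _ hβ, hcoeff,
    integral_const_mul]

end Mixture

theorem advanced_joint_convexity_add_general {Ω : Type*} [MeasurableSpace Ω] (μ : Measure Ω)
    (p q : Ω → ℝ) (κ lam : ℝ) (hκ : 1 < κ) (hl0 : 0 ≤ lam)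
    (hp : ∀ ω, 0 ≤ p ω) (hq : ∀ ω, 0 ≤ q ω) :
    (κ * (1 - lam) ≤ 1 →
      ∫ ω, max (p ω - κ * ((1 - lam) * p ω + lam * q ω)) 0 ∂μ
        = (1 - κ + κ * lam) *
            ∫ ω, max (p ω - (1 + (κ - 1) / (1 - κ + κ * lam)) * q ω) 0 ∂μ)
    ∧ (1 < κ * (1 - lam) →
      ∫ ω, max (p ω - κ * ((1 - lam) * p ω + lam * q ω)) 0 ∂μ = 0) := by
  have hκlam : 0 ≤ κ * lam := mul_nonneg (by linarith) hl0
  refine ⟨fun hle ↦ ?_, fun hgt ↦ hockeyStick_mixture_eq_zero μ p q (by linarith) hκlam hp hq⟩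
  rcases (show 0 ≤ 1 - κ + κ * lam by linarith).eq_or_lt with hβ | hβ
  · rw [← hβ, zero_mul]
    exact hockeyStick_mixture_eq_zero μ p q hβ.ge hκlam hp hq
  · exact hockeyStick_mixture_eq_mul μ p q hβ

/-- `H_κ(P ‖ (1−λ)P + λQ)` equals `β · H_{κ''}(P‖Q)` when `κ ≤ 1/(1−λ)`
(equivalently `κ(1−λ) ≤ 1`), and vanishes when `κ > 1/(1−λ)`. -/
theorem advanced_joint_convexity_add {Ω : Type*} [MeasurableSpace Ω] (μ : Measure Ω)
    (p q : Ω → ℝ) (κ lam : ℝ) (hκ : 1 < κ) (hl0 : 0 ≤ lam) (hl1 : lam ≤ 1)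
    (hp : ∀ ω, 0 ≤ p ω) (hq : ∀ ω, 0 ≤ q ω)
    (hp1 : ∫ ω, p ω ∂μ = 1) (hq1 : ∫ ω, q ω ∂μ = 1) :
    (κ * (1 - lam) ≤ 1 →
      ∫ ω, max (p ω - κ * ((1 - lam) * p ω + lam * q ω)) 0 ∂μ
        = (1 - κ + κ * lam) *
            ∫ ω, max (p ω - (1 + (κ - 1) / (1 - κ + κ * lam)) * q ω) 0 ∂μ)
    ∧ (1 < κ * (1 - lam) →
      ∫ ω, max (p ω - κ * ((1 - lam) * p ω + lam * q ω)) 0 ∂μ = 0) :=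
  advanced_joint_convexity_add_general μ p q κ lam hκ hl0 hp hq
end

section
/- If the Rényi divergence of order α > 1 satisfies D_α(P‖Q) ≤ ρ, then for any ε > 0, H_{e^ε}(P‖Q) ≤ (1/(α−1)) · e^{(α−1)(ρ−ε)} · (1 − 1/α)^α. -/
/-!
For `x = p/q ≥ 0` the elementary bound `x - e^ε ≤ K x^α` holds, with `K` chosen so that the right
side is tangent to the line `x - e^ε` (at `x = α e^ε / (α - 1)`; this is Bernoulli's inequality).
Multiplying by `q` bounds the integrand of the hockey-stick divergence pointwise by
`K q (p/q)^α`, whose integral is at most `K e^{(α-1)ρ}` by the Rényi bound.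
-/

open MeasureTheory

theorem sub_le_mul_rpow {α t x : ℝ} (hα : 1 < α) (ht : 0 < t) (hx : 0 ≤ x) :
    x - t ≤ (α - 1)⁻¹ * (1 - 1 / α) ^ α * t ^ (1 - α) * x ^ α := by
  have hα1 : 0 < α - 1 := by linarith
  have hα0 : 0 < α := by linarith
  set K := (α - 1)⁻¹ * (1 - 1 / α) ^ α * t ^ (1 - α)
  set c := α / (α - 1) * t
  have hc : 0 < c := by positivity
  have hKc : K * c ^ α = c / α := by
    have hcancel : (1 - 1 / α) ^ α * (α / (α - 1)) ^ α = 1 := by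
      rw [← Real.mul_rpow (by rw [sub_nonneg, div_le_one hα0]; exact hα.le) (by positivity)]
      rw [show (1 - 1 / α) * (α / (α - 1)) = 1 by field_simp, Real.one_rpow]
    have ht_pow : t ^ (1 - α) * t ^ α = t := by
      rw [← Real.rpow_add ht, sub_add_cancel, Real.rpow_one]
    calc K * c ^ α
        = (α - 1)⁻¹ * ((1 - 1 / α) ^ α * (α / (α - 1)) ^ α) * (t ^ (1 - α) * t ^ α) := by
          rw [Real.mul_rpow (by positivity) ht.le]; ring
      _ = c / α := by rw [hcancel, ht_pow]; simp only [c]; field_simp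
  have bernoulli : 1 + α * (x / c - 1) ≤ (x / c) ^ α := by
    have hs : -1 ≤ x / c - 1 := by linarith [div_nonneg hx hc.le]
    simpa using one_add_mul_self_le_rpow_one_add hs hα.le
  calc x - t = c / α * (1 + α * (x / c - 1)) := by simp only [c]; field_simp; ring
    _ ≤ c / α * (x / c) ^ α := by gcongr
    _ = K * x ^ α := by rw [← hKc, Real.div_rpow hx hc.le]; field_simp

theorem le_exp_of_inv_mul_log_le {c x y : ℝ} (hc : 0 < c) (h : c⁻¹ * Real.log x ≤ y) :
    x ≤ Real.exp (c * y) := by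
  rcases le_or_gt x 0 with hx | hx
  · exact hx.trans (Real.exp_pos _).le
  · exact (Real.log_le_iff_le_exp hx).mp ((inv_mul_le_iff₀ hc).mp h)

theorem renyi_const_nonneg {α t : ℝ} (hα : 1 < α) (ht : 0 ≤ t) :
    0 ≤ (α - 1)⁻¹ * (1 - 1 / α) ^ α * t ^ (1 - α) := by
  have : 0 ≤ 1 - 1 / α := by rw [sub_nonneg, div_le_one (by linarith)]; exact hα.le
  have : 0 < α - 1 := by linarith
  positivity

theorem max_sub_mul_le_mul_rpow_div {α t p q : ℝ} (hα : 1 < α) (ht : 0 < t) (hp : 0 ≤ p)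
    (hq : 0 < q) :
    max (p - t * q) 0 ≤ (α - 1)⁻¹ * (1 - 1 / α) ^ α * t ^ (1 - α) * (q * (p / q) ^ α) := by
  have hx : 0 ≤ p / q := div_nonneg hp hq.le
  refine max_le ?_ (mul_nonneg (renyi_const_nonneg hα ht.le)
    (mul_nonneg hq.le (Real.rpow_nonneg hx α)))
  calc p - t * q = q * (p / q - t) := by field_simp
    _ ≤ q * ((α - 1)⁻¹ * (1 - 1 / α) ^ α * t ^ (1 - α) * (p / q) ^ α) :=
      mul_le_mul_of_nonneg_left (sub_le_mul_rpow hα ht hx) hq.le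
    _ = _ := by ring

theorem renyi_to_hockey_stick_general {Ω : Type*} [MeasurableSpace Ω] (μ : Measure Ω)
    (p q : Ω → ℝ) (α ρ ε : ℝ) (hα : 1 < α)
    (hp : ∀ ω, 0 ≤ p ω) (hq : ∀ ω, 0 < q ω)
    (hint : Integrable (fun ω => q ω * (p ω / q ω) ^ α) μ)
    (hρ : (α - 1)⁻¹ * Real.log (∫ ω, q ω * (p ω / q ω) ^ α ∂μ) ≤ ρ) :
    ∫ ω, max (p ω - Real.exp ε * q ω) 0 ∂μ
      ≤ (α - 1)⁻¹ * Real.exp ((α - 1) * (ρ - ε)) * (1 - 1 / α) ^ α := by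
  set K := (α - 1)⁻¹ * (1 - 1 / α) ^ α * Real.exp ε ^ (1 - α)
  calc ∫ ω, max (p ω - Real.exp ε * q ω) 0 ∂μ
      ≤ ∫ ω, K * (q ω * (p ω / q ω) ^ α) ∂μ :=
        integral_mono_of_nonneg (.of_forall fun ω => le_max_right _ _) (hint.const_mul K)
          (.of_forall fun ω => max_sub_mul_le_mul_rpow_div hα (Real.exp_pos ε) (hp ω) (hq ω))
    _ = K * ∫ ω, q ω * (p ω / q ω) ^ α ∂μ := integral_const_mul K _
    _ ≤ K * Real.exp ((α - 1) * ρ) :=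
        mul_le_mul_of_nonneg_left (le_exp_of_inv_mul_log_le (by linarith) hρ)
          (renyi_const_nonneg hα (Real.exp_pos ε).le)
    _ = (α - 1)⁻¹ * Real.exp ((α - 1) * (ρ - ε)) * (1 - 1 / α) ^ α := by
        simp only [K]; rw [← Real.exp_mul, mul_assoc, ← Real.exp_add]; ring_nf

/-- Rényi divergence bounds the hockey-stick divergence: if `D_α(P‖Q) ≤ ρ` then
`H_{e^ε}(P‖Q) ≤ (1/(α−1)) e^{(α−1)(ρ−ε)} (1 − 1/α)^α`. -/
theorem renyi_to_hockey_stick {Ω : Type*} [MeasurableSpace Ω] (μ : Measure Ω)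
    (p q : Ω → ℝ) (α ρ ε : ℝ) (hα : 1 < α) (hε : 0 < ε)
    (hp : ∀ ω, 0 ≤ p ω) (hq : ∀ ω, 0 < q ω)
    (hp1 : ∫ ω, p ω ∂μ = 1) (hq1 : ∫ ω, q ω ∂μ = 1)
    (hint : Integrable (fun ω => q ω * (p ω / q ω) ^ α) μ)
    (hρ : (α - 1)⁻¹ * Real.log (∫ ω, q ω * (p ω / q ω) ^ α ∂μ) ≤ ρ) :
    ∫ ω, max (p ω - Real.exp ε * q ω) 0 ∂μ
      ≤ (α - 1)⁻¹ * Real.exp ((α - 1) * (ρ - ε)) * (1 - 1 / α) ^ α :=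
  renyi_to_hockey_stick_general μ p q α ρ ε hα hp hq hint hρ
end

section
/- For any ε > 0, the hockey-stick divergence of the random allocation mixture satisfies H_{e^ε}(P̄ ‖ Q^{⊗t}) = E_{V∼Q^{⊗t}}[ ((1/t) Σ_{i=1}^t P(V_i)/Q(V_i)) − e^ε ]₊, where P̄ := (1/t) Σ_{i=1}^t Q^{⊗(i−1)} × P × Q^{⊗(t−i)}. -/
open MeasureTheory Finset

/-!
The mixture `P̄` has density `(1/t) ∑ᵢ p(vᵢ) ∏_{j ≠ i} q(vⱼ)` with respect to `μ^{⊗t}`. Pulling out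
the product density `∏ⱼ q(vⱼ) > 0` turns it into `∏ⱼ q(vⱼ)` times the likelihood ratio
`(1/t) ∑ᵢ p(vᵢ)/q(vᵢ)`, and a nonnegative factor commutes with `[·]₊`, so the two integrands agree
pointwise.
-/

theorem Finset.sum_mul_prod_erase_eq_prod_mul_sum_div {ι K : Type*} [Field K] [DecidableEq ι]
    (s : Finset ι) (a b : ι → K) (hb : ∀ i ∈ s, b i ≠ 0) :
    ∑ i ∈ s, a i * ∏ j ∈ s.erase i, b j = (∏ j ∈ s, b j) * ∑ i ∈ s, a i / b i := by
  rw [mul_sum]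
  refine sum_congr rfl fun i hi => ?_
  rw [← mul_prod_erase s b hi]
  field_simp [hb i hi]

theorem allocation_hockey_stick_general {Ω : Type*} [MeasurableSpace Ω] (μ : Measure Ω) [SigmaFinite μ]
    (t : ℕ) (p q : Ω → ℝ) (hq : ∀ ω, 0 < q ω) (ε : ℝ) :
    ∫ v, max (((1 / (t : ℝ)) * ∑ i, p (v i) * ∏ j ∈ Finset.univ.erase i, q (v j))
          - Real.exp ε * ∏ j, q (v j)) 0 ∂(Measure.pi fun _ : Fin t => μ)
      = ∫ v, (∏ j, q (v j)) *
          max ((1 / (t : ℝ)) * (∑ i, p (v i) / q (v i)) - Real.exp ε) 0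
          ∂(Measure.pi fun _ : Fin t => μ) := by
  refine integral_congr_ae (Filter.Eventually.of_forall fun v => ?_)
  dsimp only
  have hQ : 0 ≤ ∏ j, q (v j) := prod_nonneg fun j _ => (hq (v j)).le
  rw [sum_mul_prod_erase_eq_prod_mul_sum_div _ _ _ fun i _ => (hq (v i)).ne',
    mul_max_of_nonneg _ _ hQ, mul_zero]
  congr 1
  ring

/-- Hockey-stick divergence of the allocation mixture against the product:
`H_{e^ε}(P̄ ‖ Q^{⊗t}) = E_{V∼Q^{⊗t}}[(1/t)Σ p(V_i)/q(V_i) − e^ε]₊`. -/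
theorem allocation_hockey_stick {Ω : Type*} [MeasurableSpace Ω] (μ : Measure Ω) [SigmaFinite μ]
    (t : ℕ) (ht : 1 ≤ t) (p q : Ω → ℝ) (hp : ∀ ω, 0 ≤ p ω) (hq : ∀ ω, 0 < q ω)
    (hp1 : ∫ ω, p ω ∂μ = 1) (hq1 : ∫ ω, q ω ∂μ = 1) (ε : ℝ) (hε : 0 < ε) :
    ∫ v, max (((1 / (t : ℝ)) * ∑ i, p (v i) * ∏ j ∈ Finset.univ.erase i, q (v j))
          - Real.exp ε * ∏ j, q (v j)) 0 ∂(Measure.pi fun _ : Fin t => μ)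
      = ∫ v, (∏ j, q (v j)) *
          max ((1 / (t : ℝ)) * (∑ i, p (v i) / q (v i)) - Real.exp ε) 0
          ∂(Measure.pi fun _ : Fin t => μ) :=
  allocation_hockey_stick_general μ t p q hq ε
end

section
/- Exact Rényi divergence of the allocation mixture: for integers t ≥ 1 and α ≥ 2 and distributions P, Q with P̄ := (1/t) Σ_{i=1}^t Q^{⊗(i−1)} × P × Q^{⊗(t−i)}, one has exp((α−1) D_α(P̄ ‖ Q^{⊗t})) = (1/t^α) Σ over nonnegative integers i₁,…,i_t summing to α of the multinomial coefficient (α choose i₁,…,i_t) times Π_{k: i_k ≥ 1} E_{ω∼Q}[(P(ω)/Q(ω))^{i_k}]. -/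
/-!
The likelihood ratio of the allocation mixture against `Q^{⊗t}` at `v` is
`(1/t) Σ_i P(v_i)/Q(v_i)`. Expanding its `α`-th power by the multinomial theorem gives a sum of
products of functions of single coordinates, so by Fubini each term integrates against `Q^{⊗t}`
to a product of moments `E_Q[(P/Q)^{i_k}]`, the coordinates with `i_k = 0` contributing
`E_Q[1] = 1`. The resulting sum is positive, so `exp ∘ log` cancels.
-/

open MeasureTheory Finset

section Algebra

variable {ι K : Type*} [Fintype ι] [DecidableEq ι] [Field K]

theorem sum_mul_prod_erase_eq_prod_mul_sum_div {p q : ι → K} (hq : ∀ i, q i ≠ 0) :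
    ∑ i, p i * ∏ j ∈ univ.erase i, q j = (∏ j, q j) * ∑ i, p i / q i := by
  rw [mul_sum]
  refine sum_congr rfl fun i _ => ?_
  rw [← mul_prod_erase univ q (mem_univ i)]
  field_simp [hq i]

theorem prod_mul_mixture_ratio_pow_eq_sum_multinomial (c : K) (n : ℕ) {p q : ι → K}
    (hq : ∀ i, q i ≠ 0) :
    (∏ j, q j) * ((c * ∑ i, p i * ∏ j ∈ univ.erase i, q j) / ∏ j, q j) ^ n
      = c ^ n * ∑ f ∈ piAntidiag (univ : Finset ι) n,
          (Nat.multinomial univ f : K) * ∏ i, q i * (p i / q i) ^ f i := by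
  have hprod : ∏ j, q j ≠ 0 := prod_ne_zero_iff.2 fun j _ => hq j
  rw [sum_mul_prod_erase_eq_prod_mul_sum_div hq, mul_left_comm, mul_div_cancel_left₀ _ hprod,
    mul_pow, sum_pow_eq_sum_piAntidiag, mul_left_comm, mul_sum]
  refine congrArg _ (sum_congr rfl fun f _ => ?_)
  rw [prod_mul_distrib]
  ring

end Algebra

theorem le_of_mem_piAntidiag {ι : Type*} [Fintype ι] [DecidableEq ι] {n : ℕ} {f : ι → ℕ}
    (hf : f ∈ piAntidiag (univ : Finset ι) n) (i : ι) : f i ≤ n :=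
  (mem_piAntidiag.1 hf).1 ▸ single_le_sum (fun j _ => Nat.zero_le (f j)) (mem_univ i)

theorem sum_multinomial_mul_prod_pos {ι : Type*} [Fintype ι] [DecidableEq ι] [Nonempty ι]
    (n : ℕ) {a : ℕ → ℝ} (ha : ∀ m ≤ n, 0 < a m) :
    0 < ∑ f ∈ piAntidiag (univ : Finset ι) n,
      (Nat.multinomial univ f : ℝ) * ∏ k ∈ univ.filter (fun k => 1 ≤ f k), a (f k) := by
  refine sum_pos (fun f hf => mul_pos (by exact_mod_cast Nat.multinomial_pos _ _)
    (prod_pos fun k _ => ha _ (le_of_mem_piAntidiag hf k))) ?_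
  obtain ⟨i⟩ := ‹Nonempty ι›
  exact ⟨Pi.single i n, by simp⟩

section Integral

variable {Ω ι : Type*} [MeasurableSpace Ω] {μ : Measure Ω} [Fintype ι]

theorem integral_pos_of_forall_pos {f : Ω → ℝ} (hf : ∀ ω, 0 < f ω) (hfi : Integrable f μ)
    (hμ : μ ≠ 0) : 0 < ∫ ω, f ω ∂μ := by
  rw [integral_pos_iff_support_of_nonneg (fun ω => (hf ω).le) hfi,
    Function.support_eq_univ fun ω => (hf ω).ne']
  exact Measure.measure_univ_pos.2 hμ

variable [SigmaFinite μ]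

theorem integral_pi_prod_eq_prod_filter_one_le {g : ℕ → Ω → ℝ} (hg : ∫ ω, g 0 ω ∂μ = 1)
    (f : ι → ℕ) :
    ∫ v, ∏ i, g (f i) (v i) ∂(Measure.pi fun _ : ι => μ)
      = ∏ k ∈ univ.filter (fun k => 1 ≤ f k), ∫ ω, g (f k) ω ∂μ := by
  rw [integral_fintype_prod_eq_prod (fun i => g (f i)),
    ← prod_filter_mul_prod_filter_not univ (fun k => 1 ≤ f k),
    prod_eq_one (s := univ.filter fun k => ¬ 1 ≤ f k) fun k hk => ?_, mul_one]
  rw [Nat.lt_one_iff.1 (not_le.1 (mem_filter.1 hk).2), hg]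

theorem integral_mul_mixture_ratio_pow [DecidableEq ι] {p q : Ω → ℝ} (hq : ∀ ω, q ω ≠ 0)
    (hq1 : ∫ ω, q ω ∂μ = 1) (c : ℝ) (n : ℕ)
    (hmom : ∀ m ≤ n, Integrable (fun ω => q ω * (p ω / q ω) ^ m) μ) :
    ∫ v, (∏ j, q (v j)) * ((c * ∑ i, p (v i) * ∏ j ∈ univ.erase i, q (v j)) / ∏ j, q (v j)) ^ n
        ∂(Measure.pi fun _ : ι => μ)
      = c ^ n * ∑ f ∈ piAntidiag (univ : Finset ι) n, (Nat.multinomial univ f : ℝ) *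
          ∏ k ∈ univ.filter (fun k => 1 ≤ f k), ∫ ω, q ω * (p ω / q ω) ^ f k ∂μ := by
  have hint (f) (hf : f ∈ piAntidiag (univ : Finset ι) n) : Integrable
      (fun v : ι → Ω => ∏ i, q (v i) * (p (v i) / q (v i)) ^ f i) (Measure.pi fun _ => μ) :=
    Integrable.fintype_prod fun i => hmom _ (le_of_mem_piAntidiag hf i)
  simp_rw [prod_mul_mixture_ratio_pow_eq_sum_multinomial c n fun i => hq _]
  rw [integral_const_mul, integral_finsetSum _ fun f hf => (hint f hf).const_mul _]
  refine congrArg _ (sum_congr rfl fun f _ => ?_)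
  rw [integral_const_mul, integral_pi_prod_eq_prod_filter_one_le
    (g := fun m ω => q ω * (p ω / q ω) ^ m) (by simpa using hq1)]

end Integral

theorem allocation_renyi_exact_general {Ω : Type*} [MeasurableSpace Ω] (μ : Measure Ω) [SigmaFinite μ]
    (t α : ℕ) (ht : 1 ≤ t) (hα : 2 ≤ α) (p q : Ω → ℝ)
    (hp : ∀ ω, 0 < p ω) (hq : ∀ ω, 0 < q ω)
    (hq1 : ∫ ω, q ω ∂μ = 1)
    (hmom : ∀ m ≤ α, Integrable (fun ω => q ω * (p ω / q ω) ^ m) μ) :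
    Real.exp (((α : ℝ) - 1) *
        (((α : ℝ) - 1)⁻¹ * Real.log (∫ v, (∏ j, q (v j)) *
          ((((1 / (t : ℝ)) * ∑ i, p (v i) * ∏ j ∈ Finset.univ.erase i, q (v j))
              / ∏ j, q (v j)) ^ α) ∂(Measure.pi fun _ : Fin t => μ))))
      = (1 / (t : ℝ) ^ α) * ∑ f ∈ Finset.Nat.antidiagonalTuple t α,
          (Nat.multinomial Finset.univ f : ℝ) *
            ∏ k ∈ Finset.univ.filter (fun k => 1 ≤ f k),
              ∫ ω, q ω * (p ω / q ω) ^ (f k) ∂μ := by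
  have hα1 : (α : ℝ) - 1 ≠ 0 := by
    have : (2 : ℝ) ≤ α := by exact_mod_cast hα
    linarith
  have hμ : μ ≠ 0 := by
    rintro rfl
    simp at hq1
  have : Nonempty (Fin t) := ⟨⟨0, ht⟩⟩
  have hmoment_pos (m : ℕ) (hm : m ≤ α) : 0 < ∫ ω, q ω * (p ω / q ω) ^ m ∂μ :=
    integral_pos_of_forall_pos (fun ω => by have := hp ω; have := hq ω; positivity) (hmom m hm) hμ
  have ht0 : (0 : ℝ) < t := by exact_mod_cast ht
  rw [mul_inv_cancel_left₀ hα1, integral_mul_mixture_ratio_pow (fun ω => (hq ω).ne') hq1 _ _ hmom,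
    Real.exp_log (mul_pos (by positivity) (sum_multinomial_mul_prod_pos α hmoment_pos)),
    div_pow, one_pow, piAntidiag_univ_fin_eq_antidiagonalTuple]

/-- Exact Rényi divergence of the allocation mixture: `exp((α−1)·D_α(P̄‖Q^{⊗t}))` equals
`(1/t^α) Σ_{i₁+⋯+i_t=α} (α choose i₁,…,i_t) Π_{k : i_k ≥ 1} E_Q[(P/Q)^{i_k}]`. -/
theorem allocation_renyi_exact {Ω : Type*} [MeasurableSpace Ω] (μ : Measure Ω) [SigmaFinite μ]
    (t α : ℕ) (ht : 1 ≤ t) (hα : 2 ≤ α) (p q : Ω → ℝ)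
    (hp : ∀ ω, 0 < p ω) (hq : ∀ ω, 0 < q ω)
    (hp1 : ∫ ω, p ω ∂μ = 1) (hq1 : ∫ ω, q ω ∂μ = 1)
    (hmom : ∀ m ≤ α, Integrable (fun ω => q ω * (p ω / q ω) ^ m) μ) :
    Real.exp (((α : ℝ) - 1) *
        (((α : ℝ) - 1)⁻¹ * Real.log (∫ v, (∏ j, q (v j)) *
          ((((1 / (t : ℝ)) * ∑ i, p (v i) * ∏ j ∈ Finset.univ.erase i, q (v j))
              / ∏ j, q (v j)) ^ α) ∂(Measure.pi fun _ : Fin t => μ))))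
      = (1 / (t : ℝ) ^ α) * ∑ f ∈ Finset.Nat.antidiagonalTuple t α,
          (Nat.multinomial Finset.univ f : ℝ) *
            ∏ k ∈ Finset.univ.filter (fun k => 1 ≤ f k),
              ∫ ω, q ω * (p ω / q ω) ^ (f k) ∂μ :=
  allocation_renyi_exact_general μ t α ht hα p q hp hq hq1 hmom
end

section
/- Rényi divergence of the Gaussian allocation mixture: for integers t ≥ 1 and α ≥ 2 and σ > 0, with P̄ the uniform mixture over i ∈ [t] of t-dimensional Gaussians N(e_i, σ²I_t) and Q = N(0, σ²I_t), one has D_α(P̄‖Q) = (1/(α−1)) ln( (1/t^α) Σ_{i₁+⋯+i_t = α, i_k ≥ 0} (α choose i₁,…,i_t) exp(Σ_k i_k(i_k−1)/(2σ²)) ). -/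
/-!
Against `Q = N(0, σ²I)`, the component `N(e_i, σ²I)` has likelihood ratio `r(v_i)` with
`r(x) = exp ((2x - 1) / (2σ²))`, so the Rényi integrand is `Q(v) ((1/t) Σ_i r(v_i))^α`.
The multinomial theorem and Fubini reduce its integral to the one-dimensional moments
`E_Q[r^n]`, and completing the square gives `N(0, σ²)(x) r(x)^n = e^{n(n-1)/(2σ²)} N(n, σ²)(x)`.
-/

open MeasureTheory Finset Real

/-- Gaussian density with mean `m` and standard deviation `σ`. -/
noncomputable def gaussDensity (m σ x : ℝ) : ℝ :=
  (1 / (Real.sqrt (2 * Real.pi) * σ)) * Real.exp (-(x - m) ^ 2 / (2 * σ ^ 2))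

open ProbabilityTheory

lemma gaussDensity_ne_zero (m : ℝ) {σ : ℝ} (hσ : σ ≠ 0) (x : ℝ) : gaussDensity m σ x ≠ 0 := by
  unfold gaussDensity
  positivity

lemma gaussDensity_eq_gaussianPDFReal (m : ℝ) {σ : ℝ} (hσ : 0 ≤ σ) (x : ℝ) :
    gaussDensity m σ x = gaussianPDFReal m (σ ^ 2).toNNReal x := by
  rw [gaussDensity, gaussianPDFReal_def, Real.coe_toNNReal _ (sq_nonneg σ),
    sqrt_mul (by positivity) (σ ^ 2), sqrt_sq hσ, one_div]

lemma integrable_gaussDensity (m : ℝ) {σ : ℝ} (hσ : 0 ≤ σ) : Integrable (gaussDensity m σ) := by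
  rw [funext (gaussDensity_eq_gaussianPDFReal m hσ)]
  exact integrable_gaussianPDFReal m _

lemma integral_gaussDensity (m : ℝ) {σ : ℝ} (hσ : 0 < σ) : ∫ x, gaussDensity m σ x = 1 := by
  simp_rw [gaussDensity_eq_gaussianPDFReal m hσ.le]
  exact integral_gaussianPDFReal_eq_one m (by simp [hσ.ne'])

/-- The likelihood ratio `dN(m, σ²) / dN(0, σ²)`. -/
noncomputable def gaussLikelihoodRatio (m σ x : ℝ) : ℝ :=
  rexp (m * (2 * x - m) / (2 * σ ^ 2))

lemma gaussDensity_eq_gaussLikelihoodRatio_mul (m σ x : ℝ) :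
    gaussDensity m σ x = gaussLikelihoodRatio m σ x * gaussDensity 0 σ x := by
  rw [gaussDensity, gaussDensity, gaussLikelihoodRatio, mul_left_comm, ← exp_add]
  ring_nf

lemma gaussLikelihoodRatio_pow (n : ℕ) (m σ x : ℝ) :
    gaussLikelihoodRatio m σ x ^ n
      = rexp (n * (n - 1) * m ^ 2 / (2 * σ ^ 2)) * gaussLikelihoodRatio (n * m) σ x := by
  rw [gaussLikelihoodRatio, gaussLikelihoodRatio, ← exp_nat_mul, ← exp_add]
  ring_nf

lemma gaussDensity_mul_gaussLikelihoodRatio_pow (n : ℕ) (m σ x : ℝ) :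
    gaussDensity 0 σ x * gaussLikelihoodRatio m σ x ^ n
      = rexp (n * (n - 1) * m ^ 2 / (2 * σ ^ 2)) * gaussDensity (n * m) σ x := by
  rw [gaussLikelihoodRatio_pow, gaussDensity_eq_gaussLikelihoodRatio_mul (n * m)]
  ring

lemma integrable_gaussDensity_mul_gaussLikelihoodRatio_pow (n : ℕ) (m : ℝ) {σ : ℝ} (hσ : 0 ≤ σ) :
    Integrable fun x => gaussDensity 0 σ x * gaussLikelihoodRatio m σ x ^ n := by
  simp_rw [gaussDensity_mul_gaussLikelihoodRatio_pow]
  exact (integrable_gaussDensity _ hσ).const_mul _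

lemma integral_gaussDensity_mul_gaussLikelihoodRatio_pow (n : ℕ) (m : ℝ) {σ : ℝ} (hσ : 0 < σ) :
    ∫ x, gaussDensity 0 σ x * gaussLikelihoodRatio m σ x ^ n
      = rexp (n * (n - 1) * m ^ 2 / (2 * σ ^ 2)) := by
  simp_rw [gaussDensity_mul_gaussLikelihoodRatio_pow]
  rw [integral_const_mul, integral_gaussDensity _ hσ, mul_one]

section Product

variable {ι : Type*} [Fintype ι]

lemma prod_gaussDensity_ite_eq [DecidableEq ι] (i : ι) (m σ : ℝ) (v : ι → ℝ) :
    ∏ j, gaussDensity (if j = i then m else 0) σ (v j)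
      = gaussLikelihoodRatio m σ (v i) * ∏ j, gaussDensity 0 σ (v j) := by
  have h : ∀ j, gaussDensity (if j = i then m else 0) σ (v j)
      = (if j = i then gaussLikelihoodRatio m σ (v j) else 1) * gaussDensity 0 σ (v j) := by
    intro j
    split_ifs
    exacts [gaussDensity_eq_gaussLikelihoodRatio_mul m σ (v j), (one_mul _).symm]
  simp_rw [h, prod_mul_distrib, prod_ite_eq', mem_univ, if_true]

lemma integral_prod_gaussDensity_mul_gaussLikelihoodRatio_pow (f : ι → ℕ) (m : ℝ) {σ : ℝ}
    (hσ : 0 < σ) :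
    ∫ v : ι → ℝ, ∏ j, gaussDensity 0 σ (v j) * gaussLikelihoodRatio m σ (v j) ^ f j
      = rexp (∑ j, f j * (f j - 1) * m ^ 2 / (2 * σ ^ 2)) := by
  rw [integral_fintype_prod_volume_eq_prod
    (fun j x => gaussDensity 0 σ x * gaussLikelihoodRatio m σ x ^ f j), exp_sum]
  simp_rw [integral_gaussDensity_mul_gaussLikelihoodRatio_pow _ _ hσ]

end Product

lemma prod_gaussDensity_mul_mixture_ratio_pow (t α : ℕ) (m : ℝ) {σ : ℝ} (hσ : σ ≠ 0)
    (v : Fin t → ℝ) :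
    (∏ j, gaussDensity 0 σ (v j)) *
      (((1 / (t : ℝ)) * ∑ i, ∏ j, gaussDensity (if j = i then m else 0) σ (v j)) /
          ∏ j, gaussDensity 0 σ (v j)) ^ α
      = (1 / (t : ℝ)) ^ α * ∑ f ∈ Nat.antidiagonalTuple t α, (Nat.multinomial univ f : ℝ) *
          ∏ j, gaussDensity 0 σ (v j) * gaussLikelihoodRatio m σ (v j) ^ f j := by
  have hQ : ∏ j, gaussDensity 0 σ (v j) ≠ 0 :=
    prod_ne_zero_iff.2 fun j _ => gaussDensity_ne_zero 0 hσ (v j)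
  simp_rw [prod_gaussDensity_ite_eq, ← sum_mul, ← mul_assoc, mul_div_cancel_right₀ _ hQ, mul_pow,
    sum_pow_eq_sum_piAntidiag, piAntidiag_univ_fin_eq_antidiagonalTuple, mul_sum, prod_mul_distrib]
  exact sum_congr rfl fun f _ => by ring

theorem gaussian_allocation_renyi_general (t α : ℕ) (σ : ℝ) (hσ : 0 < σ) :
    ((α : ℝ) - 1)⁻¹ * Real.log (∫ v : Fin t → ℝ,
        (∏ j, gaussDensity 0 σ (v j)) *
          ((((1 / (t : ℝ)) * ∑ i, ∏ j, gaussDensity (if j = i then 1 else 0) σ (v j)) /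
              ∏ j, gaussDensity 0 σ (v j)) ^ α)
        ∂(Measure.pi fun _ : Fin t => (volume : Measure ℝ)))
      = ((α : ℝ) - 1)⁻¹ * Real.log ((1 / (t : ℝ) ^ α) *
          ∑ f ∈ Finset.Nat.antidiagonalTuple t α,
            (Nat.multinomial Finset.univ f : ℝ) *
              Real.exp (∑ k, (f k : ℝ) * ((f k : ℝ) - 1) / (2 * σ ^ 2))) := by
  rw [← volume_pi]
  congr 2
  simp_rw [prod_gaussDensity_mul_mixture_ratio_pow t α 1 hσ.ne']
  rw [integral_const_mul, integral_finsetSum _ fun f _ => (Integrable.fintype_prod fun j =>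
    integrable_gaussDensity_mul_gaussLikelihoodRatio_pow (f j) 1 hσ.le).const_mul _]
  simp_rw [integral_const_mul, integral_prod_gaussDensity_mul_gaussLikelihoodRatio_pow _ _ hσ,
    one_pow, mul_one, div_pow, one_pow]

/-- Rényi divergence of the Gaussian allocation mixture: with `P̄` the uniform mixture of
`N(e_i, σ²I_t)` over `i ∈ [t]` and `Q = N(0, σ²I_t)`,
`D_α(P̄‖Q) = (1/(α−1)) ln((1/t^α) Σ_{i₁+⋯+i_t=α} (α choose i₁,…,i_t) exp(Σ_k i_k(i_k−1)/(2σ²)))`. -/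
theorem gaussian_allocation_renyi (t α : ℕ) (ht : 1 ≤ t) (hα : 2 ≤ α) (σ : ℝ) (hσ : 0 < σ) :
    ((α : ℝ) - 1)⁻¹ * Real.log (∫ v : Fin t → ℝ,
        (∏ j, gaussDensity 0 σ (v j)) *
          ((((1 / (t : ℝ)) * ∑ i, ∏ j, gaussDensity (if j = i then 1 else 0) σ (v j)) /
              ∏ j, gaussDensity 0 σ (v j)) ^ α)
        ∂(Measure.pi fun _ : Fin t => (volume : Measure ℝ)))
      = ((α : ℝ) - 1)⁻¹ * Real.log ((1 / (t : ℝ) ^ α) *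
          ∑ f ∈ Finset.Nat.antidiagonalTuple t α,
            (Nat.multinomial Finset.univ f : ℝ) *
              Real.exp (∑ k, (f k : ℝ) * ((f k : ℝ) - 1) / (2 * σ ^ 2))) :=
  gaussian_allocation_renyi_general t α σ hσ
end

section
/- The privacy loss of the allocation mixture against the product satisfies: for a view v ∈ Ωᵗ with prefix v^i = (y₁,…,y_i), ln(P̄(v^i)/Q^{⊗i}(v^i)) = ln( (1/t)·( t − i + Σ_{j=1}^i P(y_j)/Q(y_j) ) ), where P̄(v^i) denotes the marginal of P̄ on the first i coordinates. -/
/-!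
The `m`-th summand is the prefix marginal of the mixture component
`Q^{⊗(m−1)} × P × Q^{⊗(t−m)}`: its `P` factor falls inside the prefix only when `m < i`,
otherwise it integrates out. Dividing by `Q^{⊗i}(v)` therefore turns the `m`-th summand into
`p(y_m)/q(y_m)` for `m < i` and into `1` for the remaining `t − i` indices.
-/

open MeasureTheory Finset

theorem Finset.mul_prod_erase_eq_div_mul_prod {ι K : Type*} [Fintype ι] [DecidableEq ι] [Field K]
    (f g : ι → K) {a : ι} (ha : g a ≠ 0) :
    f a * ∏ j ∈ univ.erase a, g j = f a / g a * ∏ j, g j := by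
  rw [← mul_prod_erase univ g (mem_univ a), ← mul_assoc, div_mul_cancel₀ _ ha]

theorem Fin.sum_dite_lt_eq_sum_add_nsmul {M : Type*} [AddCommMonoid M] {i t : ℕ} (hit : i ≤ t)
    (f : Fin i → M) (c : M) :
    ∑ m : Fin t, (if h : (m : ℕ) < i then f ⟨m, h⟩ else c) = ∑ j, f j + (t - i) • c := by
  obtain ⟨k, rfl⟩ := Nat.exists_eq_add_of_le hit
  rw [Fin.sum_univ_add, Nat.add_sub_cancel_left]
  simp

theorem allocation_prefix_loss_general {Ω : Type*} (t i : ℕ) (hit : i ≤ t)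
    (p q : Ω → ℝ) (hq : ∀ ω, 0 < q ω) (v : Fin i → Ω) :
    Real.log (((1 / (t : ℝ)) * ∑ m : Fin t,
        (if h : (m : ℕ) < i then
            p (v ⟨m, h⟩) * ∏ j ∈ Finset.univ.erase (⟨m, h⟩ : Fin i), q (v j)
          else ∏ j, q (v j))) / ∏ j, q (v j))
      = Real.log ((1 / (t : ℝ)) * ((t : ℝ) - (i : ℝ) + ∑ j, p (v j) / q (v j))) := by
  have hsummand : ∀ m : Fin t,
      (if h : (m : ℕ) < i then
          p (v ⟨m, h⟩) * ∏ j ∈ univ.erase (⟨m, h⟩ : Fin i), q (v j)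
        else ∏ j, q (v j))
      = (if h : (m : ℕ) < i then p (v ⟨m, h⟩) / q (v ⟨m, h⟩) else 1) * ∏ j, q (v j) := by
    intro m
    split_ifs
    · exact mul_prod_erase_eq_div_mul_prod (p ∘ v) (q ∘ v) (hq _).ne'
    · exact (one_mul _).symm
  have hprod : ∏ j, q (v j) ≠ 0 := prod_ne_zero_iff.2 fun j _ => (hq _).ne'
  rw [sum_congr rfl fun m _ => hsummand m, ← sum_mul, ← mul_assoc, mul_div_cancel_right₀ _ hprod,
    Fin.sum_dite_lt_eq_sum_add_nsmul hit (fun j => p (v j) / q (v j)), nsmul_one,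
    Nat.cast_sub hit, add_comm]

/-- Privacy loss of the prefix marginal of the allocation mixture: for a prefix view
`v = (y₁,…,y_i)`, the marginal of `P̄` on the first `i` coordinates is
`(1/t)(Σ_{m<i} p(y_m)Π_{j≠m}q(y_j) + (t−i)Π_j q(y_j))`, and
`ln(P̄(v)/Q^{⊗i}(v)) = ln((1/t)(t − i + Σ_j p(y_j)/q(y_j)))`. -/
theorem allocation_prefix_loss {Ω : Type*} (t i : ℕ) (ht : 1 ≤ t) (hit : i ≤ t)
    (p q : Ω → ℝ) (hp : ∀ ω, 0 < p ω) (hq : ∀ ω, 0 < q ω) (v : Fin i → Ω) :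
    Real.log (((1 / (t : ℝ)) * ∑ m : Fin t,
        (if h : (m : ℕ) < i then
            p (v ⟨m, h⟩) * ∏ j ∈ Finset.univ.erase (⟨m, h⟩ : Fin i), q (v j)
          else ∏ j, q (v j))) / ∏ j, q (v j))
      = Real.log ((1 / (t : ℝ)) * ((t : ℝ) - (i : ℝ) + ∑ j, p (v j) / q (v j))) :=
  allocation_prefix_loss_general t i hit p q hq v
end

section
/- If a mechanism's output distributions satisfy sup over measurable sets C of (P(C) − e^ε Q(C)) ≤ δ (i.e., (ε,δ)-indistinguishability), then the probability under P that the log-likelihood ratio exceeds 2ε is at most 2δ/(1 − e^{−ε}). -/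
/-!
On the event `A` where the log-likelihood ratio exceeds `2ε`, the density ratio exceeds `e^{2ε}`,
so `Q(A) ≤ e^{-2ε} P(A)`. Inserting this into `P(A) - e^ε Q(A) ≤ δ` gives
`P(A) (1 - e^{-ε}) ≤ δ`, which is even a factor `2` better than claimed.
-/

open MeasureTheory

section

variable {Ω : Type*} [MeasurableSpace Ω] {μ : Measure Ω} {p q : Ω → ℝ}

lemma measurableSet_lt_log_div (hpm : Measurable p) (hqm : Measurable q) (t : ℝ) :
    MeasurableSet {ω | t < Real.log (p ω / q ω)} :=
  measurableSet_lt measurable_const (hpm.div hqm).log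

lemma exp_mul_lt_of_lt_log_div {x y t : ℝ} (hx : 0 < x) (hy : 0 < y)
    (h : t < Real.log (x / y)) : Real.exp t * y < x :=
  (lt_div_iff₀ hy).1 ((Real.lt_log_iff_exp_lt (div_pos hx hy)).1 h)

lemma setIntegral_le_exp_neg_mul_of_exp_mul_le {s : Set Ω} {t : ℝ} (hs : MeasurableSet s)
    (hp : IntegrableOn p s μ) (hq : IntegrableOn q s μ) (h : ∀ ω ∈ s, Real.exp t * q ω ≤ p ω) :
    ∫ ω in s, q ω ∂μ ≤ Real.exp (-t) * ∫ ω in s, p ω ∂μ := by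
  rw [← integral_const_mul]
  refine setIntegral_mono_on hq (hp.const_mul _) hs fun ω hω => ?_
  rw [Real.exp_neg, ← div_eq_inv_mul, le_div_iff₀ (Real.exp_pos t), mul_comm]
  exact h ω hω

lemma setIntegral_le_div_of_exp_mul_le {s : Set Ω} {ε t δ : ℝ} (hεt : ε < t)
    (hs : MeasurableSet s)
    (hp : IntegrableOn p s μ) (hq : IntegrableOn q s μ) (h : ∀ ω ∈ s, Real.exp t * q ω ≤ p ω)
    (hδ : (∫ ω in s, p ω ∂μ) - Real.exp ε * ∫ ω in s, q ω ∂μ ≤ δ) :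
    ∫ ω in s, p ω ∂μ ≤ δ / (1 - Real.exp (ε - t)) := by
  have hq_le := setIntegral_le_exp_neg_mul_of_exp_mul_le hs hp hq h
  have hexp : Real.exp (ε - t) < 1 := Real.exp_lt_one_iff.2 (by linarith)
  rw [le_div_iff₀ (by linarith)]
  calc (∫ ω in s, p ω ∂μ) * (1 - Real.exp (ε - t))
      = (∫ ω in s, p ω ∂μ) - Real.exp ε * (Real.exp (-t) * ∫ ω in s, p ω ∂μ) := by
        rw [sub_eq_add_neg ε, Real.exp_add]; ring
    _ ≤ (∫ ω in s, p ω ∂μ) - Real.exp ε * ∫ ω in s, q ω ∂μ := by gcongr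
    _ ≤ δ := hδ

end

theorem dp_implies_loss_tail_general {Ω : Type*} [MeasurableSpace Ω] (μ : Measure Ω)
    (p q : Ω → ℝ) (ε δ : ℝ) (hε : 0 < ε)
    (hp : ∀ ω, 0 < p ω) (hq : ∀ ω, 0 < q ω)
    (hpm : Measurable p) (hqm : Measurable q)
    (hintp : Integrable p μ) (hintq : Integrable q μ)
    (hPQ : ∀ C : Set Ω, MeasurableSet C →
      (∫ ω in C, p ω ∂μ) - Real.exp ε * ∫ ω in C, q ω ∂μ ≤ δ) :
    ∫ ω in {ω | 2 * ε < Real.log (p ω / q ω)}, p ω ∂μ ≤ 2 * δ / (1 - Real.exp (-ε)) := by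
  have hδ : 0 ≤ δ := by simpa using hPQ ∅ .empty
  have hA := measurableSet_lt_log_div hpm hqm (2 * ε)
  have hexp : Real.exp (-ε) < 1 := Real.exp_lt_one_iff.2 (by linarith)
  calc ∫ ω in {ω | 2 * ε < Real.log (p ω / q ω)}, p ω ∂μ
      ≤ δ / (1 - Real.exp (ε - 2 * ε)) :=
        setIntegral_le_div_of_exp_mul_le (by linarith) hA
          hintp.integrableOn hintq.integrableOn
          (fun ω hω => (exp_mul_lt_of_lt_log_div (hp ω) (hq ω) hω).le) (hPQ _ hA)
    _ = δ / (1 - Real.exp (-ε)) := by ring_nf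
    _ ≤ 2 * δ / (1 - Real.exp (-ε)) := by gcongr; linarith

/-- If `P` and `Q` are `(ε,δ)`-indistinguishable (in both directions), then the probability
under `P` that the log-likelihood ratio exceeds `2ε` is at most `2δ/(1 − e^{−ε})`. -/
theorem dp_implies_loss_tail {Ω : Type*} [MeasurableSpace Ω] (μ : Measure Ω)
    (p q : Ω → ℝ) (ε δ : ℝ) (hε : 0 < ε) (hδ0 : 0 ≤ δ) (hδ1 : δ ≤ 1)
    (hp : ∀ ω, 0 < p ω) (hq : ∀ ω, 0 < q ω)
    (hpm : Measurable p) (hqm : Measurable q)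
    (hp1 : ∫ ω, p ω ∂μ = 1) (hq1 : ∫ ω, q ω ∂μ = 1)
    (hintp : Integrable p μ) (hintq : Integrable q μ)
    (hPQ : ∀ C : Set Ω, MeasurableSet C →
      (∫ ω in C, p ω ∂μ) - Real.exp ε * ∫ ω in C, q ω ∂μ ≤ δ)
    (hQP : ∀ C : Set Ω, MeasurableSet C →
      (∫ ω in C, q ω ∂μ) - Real.exp ε * ∫ ω in C, p ω ∂μ ≤ δ) :
    ∫ ω in {ω | 2 * ε < Real.log (p ω / q ω)}, p ω ∂μ ≤ 2 * δ / (1 - Real.exp (-ε)) :=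
  dp_implies_loss_tail_general μ p q ε δ hε hp hq hpm hqm hintp hintq hPQ
end
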